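/- Let φ : ℝ × (0,∞) → ℝ, (t,r) ↦ φ(t,r), be smooth (a radially symmetric scalar field), and set Ψ := r^{1/2}·G·∂_rφ. Define the wave operator □φ := −∂_t²φ + G·∂_r(G·∂_rφ) + r^{-1}G²·∂_rφ. Then the identity r^{1/2}·G·∂_r(□φ) = −∂_t²Ψ + G·∂_r(G·∂_rΨ) − (3/4)r^{-2}G(r)(G(r) − (2/3)rG'(r))·Ψ holds at every point of ℝ × (0,∞). (Thus the commuted quantity Ψ = r^{1/2}G∂_rφ solves a wave equation whose inverse-square potential carries the favourable constant +3/4 instead of −1/4.) -/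

import Mathlib

open MeasureTheory Real Filter Set

noncomputable section

/-- The Japanese bracket `⟨r⟩ = √(2 + r²)`. -/
def jap (r : ℝ) : ℝ := Real.sqrt (2 + r ^ 2)

/-- The scaling derivative `r·d/dr`. -/
def rD (f : ℝ → ℝ) : ℝ → ℝ := fun r => r * deriv f r

/-- `f = 𝒪(g)`: every iterate `(r·d/dr)^k f` is bounded by a constant times `g` on `(0,∞)`. -/
def BigO (f g : ℝ → ℝ) : Prop := ∀ k : ℕ, ∃ C > 0, ∀ r > 0, |rD^[k] f r| ≤ C * g r

/-- The point of `ℝ²` with polar coordinates `(r,θ)`. -/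
def polarPt (r θ : ℝ) : EuclideanSpace ℝ (Fin 2) :=
  (WithLp.equiv 2 (Fin 2 → ℝ)).symm ![r * Real.cos θ, r * Real.sin θ]

/-- The assumptions on the radial profiles `A`, `B` of the stationary, radially symmetric,
asymptotically flat perturbation `g = −A(r)²dt² + B(r)²dr² + r²dθ²` of the Minkowski metric. -/
structure MetricHyp (ε a : ℝ) (A B : ℝ → ℝ) : Prop where
  εpos : 0 < ε
  a_gt : 1 < a
  smoothA : ContDiff ℝ (⊤ : ℕ∞) fun x : EuclideanSpace ℝ (Fin 2) => A ‖x‖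
  smoothB : ContDiff ℝ (⊤ : ℕ∞) fun x : EuclideanSpace ℝ (Fin 2) => B ‖x‖
  eq_at_zero : A 0 = B 0
  bigO_A : BigO (fun r => A r - 1) fun r => ε * jap r ^ (-a)
  bigO_B : BigO (fun r => B r - 1) fun r => ε * jap r ^ (-a)

/-- `∂_t` in `(t,r)` coordinates. -/
def dtR (w : ℝ → ℝ → ℝ) : ℝ → ℝ → ℝ := fun t r => deriv (fun t' => w t' r) t

/-- `∂_r` in `(t,r)` coordinates. -/
def drR (w : ℝ → ℝ → ℝ) : ℝ → ℝ → ℝ := fun t r => deriv (fun r' => w t r') r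

/-- The radial wave operator `□φ = −∂_t²φ + G∂_r(G∂_rφ) + r⁻¹G²∂_rφ` in `(t,r)` coordinates
(equal to `A²·□_g` on radially symmetric functions). -/
def BoxR (G : ℝ → ℝ) (w : ℝ → ℝ → ℝ) : ℝ → ℝ → ℝ :=
  fun t r =>
    -(dtR (dtR w) t r)
      + G r * drR (fun t' r' => G r' * drR w t' r') t r
      + r⁻¹ * G r ^ 2 * drR w t r

/-- The good commuted quantity `Ψ = r^{1/2}·G·∂_rφ`. -/
def PsiR (G : ℝ → ℝ) (φ : ℝ → ℝ → ℝ) : ℝ → ℝ → ℝ :=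
  fun t r => Real.sqrt r * G r * drR φ t r

namespace PsiAux

lemma isOpen_Omega : IsOpen {p : ℝ × ℝ | 0 < p.2} :=
  isOpen_lt continuous_const continuous_snd

lemma hasDerivAt_of_smooth {g : ℝ → ℝ} {s : Set ℝ} (hs : IsOpen s)
    (hg : ContDiffOn ℝ (⊤ : ℕ∞) g s) {r : ℝ} (hr : r ∈ s) : HasDerivAt g (deriv g r) r :=
  (((hg.differentiableOn (by simp)).differentiableAt (hs.mem_nhds hr))).hasDerivAt

lemma derivSmooth {g : ℝ → ℝ} {s : Set ℝ} (hs : IsOpen s)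
    (hg : ContDiffOn ℝ (⊤ : ℕ∞) g s) : ContDiffOn ℝ (⊤ : ℕ∞) (deriv g) s :=
  hg.deriv_of_isOpen hs (by simp)

lemma diffAt_of_smoothOn {W : ℝ × ℝ → ℝ} (hW : ContDiffOn ℝ (⊤ : ℕ∞) W {p : ℝ × ℝ | 0 < p.2})
    {t r : ℝ} (hr : 0 < r) : DifferentiableAt ℝ W (t, r) :=
  (hW.differentiableOn (by simp)).differentiableAt (isOpen_Omega.mem_nhds hr)

lemma hasDerivAt_slice_t {w : ℝ → ℝ → ℝ} {t r : ℝ}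
    (h : DifferentiableAt ℝ (fun p : ℝ × ℝ => w p.1 p.2) (t, r)) :
    HasDerivAt (fun t' => w t' r) (fderiv ℝ (fun p : ℝ × ℝ => w p.1 p.2) (t, r) (1, 0)) t := by
  have h1 : HasDerivAt (fun t' : ℝ => ((t', r) : ℝ × ℝ)) (1, 0) t :=
    HasDerivAt.prodMk (hasDerivAt_id t) (hasDerivAt_const t r)
  exact HasFDerivAt.comp_hasDerivAt (f := fun t' : ℝ => ((t', r) : ℝ × ℝ)) (x := t)
    h.hasFDerivAt h1

lemma hasDerivAt_slice_r {w : ℝ → ℝ → ℝ} {t r : ℝ}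
    (h : DifferentiableAt ℝ (fun p : ℝ × ℝ => w p.1 p.2) (t, r)) :
    HasDerivAt (fun r' => w t r') (fderiv ℝ (fun p : ℝ × ℝ => w p.1 p.2) (t, r) (0, 1)) r := by
  have h1 : HasDerivAt (fun r' : ℝ => ((t, r') : ℝ × ℝ)) (0, 1) r :=
    HasDerivAt.prodMk (hasDerivAt_const r t) (hasDerivAt_id r)
  exact HasFDerivAt.comp_hasDerivAt (f := fun r' : ℝ => ((t, r') : ℝ × ℝ)) (x := r)
    h.hasFDerivAt h1

lemma contDiffOn_dt {w : ℝ → ℝ → ℝ}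
    (hw : ContDiffOn ℝ (⊤ : ℕ∞) (fun p : ℝ × ℝ => w p.1 p.2) {p : ℝ × ℝ | 0 < p.2}) :
    ContDiffOn ℝ (⊤ : ℕ∞) (fun p : ℝ × ℝ => dtR w p.1 p.2) {p : ℝ × ℝ | 0 < p.2} := by
  have h1 : ContDiffOn ℝ (⊤ : ℕ∞)
      (fun p : ℝ × ℝ => fderiv ℝ (fun p : ℝ × ℝ => w p.1 p.2) p ((1 : ℝ), (0 : ℝ)))
      {p : ℝ × ℝ | 0 < p.2} :=
    (hw.fderiv_of_isOpen isOpen_Omega (by simp)).clm_apply contDiffOn_const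
  refine h1.congr ?_
  intro p hp
  have := (hasDerivAt_slice_t (w := w) (t := p.1) (r := p.2) (diffAt_of_smoothOn hw hp)).deriv
  simpa [dtR] using this

lemma contDiffOn_dr {w : ℝ → ℝ → ℝ}
    (hw : ContDiffOn ℝ (⊤ : ℕ∞) (fun p : ℝ × ℝ => w p.1 p.2) {p : ℝ × ℝ | 0 < p.2}) :
    ContDiffOn ℝ (⊤ : ℕ∞) (fun p : ℝ × ℝ => drR w p.1 p.2) {p : ℝ × ℝ | 0 < p.2} := by
  have h1 : ContDiffOn ℝ (⊤ : ℕ∞)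
      (fun p : ℝ × ℝ => fderiv ℝ (fun p : ℝ × ℝ => w p.1 p.2) p ((0 : ℝ), (1 : ℝ)))
      {p : ℝ × ℝ | 0 < p.2} :=
    (hw.fderiv_of_isOpen isOpen_Omega (by simp)).clm_apply contDiffOn_const
  refine h1.congr ?_
  intro p hp
  have := (hasDerivAt_slice_r (w := w) (t := p.1) (r := p.2) (diffAt_of_smoothOn hw hp)).deriv
  simpa [drR] using this

lemma clairaut {w : ℝ → ℝ → ℝ}
    (hw : ContDiffOn ℝ (⊤ : ℕ∞) (fun p : ℝ × ℝ => w p.1 p.2) {p : ℝ × ℝ | 0 < p.2})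
    {t r : ℝ} (hr : 0 < r) :
    dtR (drR w) t r = drR (dtR w) t r := by
  set W : ℝ × ℝ → ℝ := fun p => w p.1 p.2 with hWdef
  set F1 : ℝ × ℝ → (ℝ × ℝ) →L[ℝ] ℝ := fderiv ℝ W with hF1def
  have hΩmem : ((t, r) : ℝ × ℝ) ∈ {p : ℝ × ℝ | 0 < p.2} := hr
  have hF1smooth : ContDiffOn ℝ (⊤ : ℕ∞) F1 {p : ℝ × ℝ | 0 < p.2} :=
    hw.fderiv_of_isOpen isOpen_Omega (by simp)
  have hF1at : DifferentiableAt ℝ F1 (t, r) :=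
    (hF1smooth.differentiableOn (by simp)).differentiableAt (isOpen_Omega.mem_nhds hΩmem)
  have hsymm : ∀ v u : ℝ × ℝ, fderiv ℝ F1 (t, r) v u = fderiv ℝ F1 (t, r) u v := by
    apply second_derivative_symmetric_of_eventually (f := W)
    · filter_upwards [isOpen_Omega.mem_nhds hΩmem] with q hq
      exact (diffAt_of_smoothOn hw hq).hasFDerivAt
    · exact hF1at.hasFDerivAt
  have happ : ∀ v : ℝ × ℝ, DifferentiableAt ℝ (fun p : ℝ × ℝ => F1 p v) (t, r) :=
    fun v => hF1at.clm_apply (differentiableAt_const v)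
  have hfd : ∀ v : ℝ × ℝ,
      fderiv ℝ (fun p : ℝ × ℝ => F1 p v) (t, r) = (fderiv ℝ F1 (t, r)).flip v := by
    intro v
    rw [fderiv_clm_apply hF1at (differentiableAt_const v)]
    simp
  have hL : dtR (drR w) t r = fderiv ℝ F1 (t, r) (1, 0) (0, 1) := by
    have heq : (fun t' => drR w t' r) = fun t' => F1 (t', r) (0, 1) := by
      funext t'
      exact (hasDerivAt_slice_r (diffAt_of_smoothOn hw (show (0:ℝ) < r from hr))).deriv
    have h2 : HasDerivAt (fun t' => F1 (t', r) (0, 1))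
        (fderiv ℝ (fun p : ℝ × ℝ => F1 p (0, 1)) (t, r) (1, 0)) t :=
      hasDerivAt_slice_t (w := fun t' r' => F1 (t', r') (0, 1)) (happ (0, 1))
    calc dtR (drR w) t r = deriv (fun t' => F1 (t', r) (0, 1)) t := by rw [dtR, heq]
      _ = fderiv ℝ (fun p : ℝ × ℝ => F1 p (0, 1)) (t, r) (1, 0) := h2.deriv
      _ = fderiv ℝ F1 (t, r) (1, 0) (0, 1) := by rw [hfd]; simp
  have hR : drR (dtR w) t r = fderiv ℝ F1 (t, r) (0, 1) (1, 0) := by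
    have heq : (fun r' => dtR w t r') =ᶠ[nhds r] fun r' => F1 (t, r') (1, 0) := by
      filter_upwards [isOpen_Ioi.mem_nhds (show r ∈ Ioi (0:ℝ) from hr)] with r' hr'
      exact (hasDerivAt_slice_t (diffAt_of_smoothOn hw hr')).deriv
    have h2 : HasDerivAt (fun r' => F1 (t, r') (1, 0))
        (fderiv ℝ (fun p : ℝ × ℝ => F1 p (1, 0)) (t, r) (0, 1)) r :=
      hasDerivAt_slice_r (w := fun t' r' => F1 (t', r') (1, 0)) (happ (1, 0))
    calc drR (dtR w) t r = deriv (fun r' => F1 (t, r') (1, 0)) r := heq.deriv_eq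
      _ = fderiv ℝ (fun p : ℝ × ℝ => F1 p (1, 0)) (t, r) (0, 1) := h2.deriv
      _ = fderiv ℝ F1 (t, r) (0, 1) (1, 0) := by rw [hfd]; simp
  rw [hL, hR, hsymm]

lemma core (G f : ℝ → ℝ) (s : Set ℝ) (hs : IsOpen s) (hsub : s ⊆ Set.Ioi (0 : ℝ))
    (hGs : ContDiffOn ℝ (⊤ : ℕ∞) G s) (hfs : ContDiffOn ℝ (⊤ : ℕ∞) f s) {r : ℝ} (hr : r ∈ s) :
    ∃ DL : ℝ,
      HasDerivAt (fun x => G x * deriv (fun y => G y * deriv f y) x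
          + x⁻¹ * G x ^ 2 * deriv f x) DL r ∧
      Real.sqrt r * G r * DL
        = G r * deriv (fun x => G x * deriv (fun y => Real.sqrt y * G y * deriv f y) x) r
          - (3 / 4) * r⁻¹ ^ 2 * G r * (G r - (2 / 3) * r * deriv G r)
            * (Real.sqrt r * G r * deriv f r) := by
  have hrpos : (0 : ℝ) < r := hsub hr
  have hp : ContDiffOn ℝ (⊤ : ℕ∞) (deriv f) s := derivSmooth hs hfs
  have hq : ContDiffOn ℝ (⊤ : ℕ∞) (deriv (deriv f)) s := derivSmooth hs hp
  have ha1 : ContDiffOn ℝ (⊤ : ℕ∞) (deriv G) s := derivSmooth hs hGs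
  have HG : ∀ x ∈ s, HasDerivAt G (deriv G x) x := fun x hx => hasDerivAt_of_smooth hs hGs hx
  have HA1 : ∀ x ∈ s, HasDerivAt (deriv G) (deriv (deriv G) x) x :=
    fun x hx => hasDerivAt_of_smooth hs ha1 hx
  have HP : ∀ x ∈ s, HasDerivAt (deriv f) (deriv (deriv f) x) x :=
    fun x hx => hasDerivAt_of_smooth hs hp hx
  have HQ : ∀ x ∈ s, HasDerivAt (deriv (deriv f)) (deriv (deriv (deriv f)) x) x :=
    fun x hx => hasDerivAt_of_smooth hs hq hx
  have E1 : ∀ x ∈ s, deriv (fun y => G y * deriv f y) x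
      = deriv G x * deriv f x + G x * deriv (deriv f) x :=
    fun x hx => ((HG x hx).mul (HP x hx)).deriv
  have E2 : ∀ x ∈ s, deriv (fun y => Real.sqrt y * G y * deriv f y) x
      = (1 / (2 * Real.sqrt x) * G x + Real.sqrt x * deriv G x) * deriv f x
        + Real.sqrt x * G x * deriv (deriv f) x := by
    intro x hx
    have hx0 : x ≠ 0 := ne_of_gt (hsub hx)
    exact (((Real.hasDerivAt_sqrt hx0).mul (HG x hx)).mul (HP x hx)).deriv
  have hLcong : (fun x => G x * deriv (fun y => G y * deriv f y) x
        + x⁻¹ * G x ^ 2 * deriv f x)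
      =ᶠ[nhds r] fun x => G x * (deriv G x * deriv f x + G x * deriv (deriv f) x)
        + x⁻¹ * G x ^ 2 * deriv f x := by
    filter_upwards [hs.mem_nhds hr] with x hx
    rw [E1 x hx]
  have HD1 : HasDerivAt (fun x => G x * (deriv G x * deriv f x + G x * deriv (deriv f) x))
      (deriv G r * (deriv G r * deriv f r + G r * deriv (deriv f) r)
        + G r * ((deriv (deriv G) r * deriv f r + deriv G r * deriv (deriv f) r)
          + (deriv G r * deriv (deriv f) r + G r * deriv (deriv (deriv f)) r))) r :=
    (HG r hr).mul (((HA1 r hr).mul (HP r hr)).add ((HG r hr).mul (HQ r hr)))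
  have HD2 : HasDerivAt (fun x => x⁻¹ * G x ^ 2 * deriv f x)
      ((-(r ^ 2)⁻¹ * G r ^ 2 + r⁻¹ * (2 * G r ^ 1 * deriv G r)) * deriv f r
        + r⁻¹ * G r ^ 2 * deriv (deriv f) r) r :=
    ((hasDerivAt_inv (ne_of_gt hrpos)).mul ((HG r hr).pow 2)).mul (HP r hr)
  have HL : HasDerivAt (fun x => G x * deriv (fun y => G y * deriv f y) x
      + x⁻¹ * G x ^ 2 * deriv f x)
      ((deriv G r * (deriv G r * deriv f r + G r * deriv (deriv f) r)
        + G r * ((deriv (deriv G) r * deriv f r + deriv G r * deriv (deriv f) r)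
          + (deriv G r * deriv (deriv f) r + G r * deriv (deriv (deriv f)) r)))
        + ((-(r ^ 2)⁻¹ * G r ^ 2 + r⁻¹ * (2 * G r ^ 1 * deriv G r)) * deriv f r
          + r⁻¹ * G r ^ 2 * deriv (deriv f) r)) r :=
    (HD1.add HD2).congr_of_eventuallyEq hLcong
  refine ⟨_, HL, ?_⟩
  have hRcong : (fun x => G x * deriv (fun y => Real.sqrt y * G y * deriv f y) x)
      =ᶠ[nhds r] fun x => G x
        * ((1 / (2 * Real.sqrt x) * G x + Real.sqrt x * deriv G x) * deriv f x
          + Real.sqrt x * G x * deriv (deriv f) x) := by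
    filter_upwards [hs.mem_nhds hr] with x hx
    rw [E2 x hx]
  have hr0 : r ≠ 0 := ne_of_gt hrpos
  have hsq : Real.sqrt r ≠ 0 := ne_of_gt (Real.sqrt_pos.2 hrpos)
  have Hsqrt : HasDerivAt Real.sqrt (1 / (2 * Real.sqrt r)) r := Real.hasDerivAt_sqrt hr0
  have Hdiv : HasDerivAt (fun x => 1 / (2 * Real.sqrt x))
      ((0 * (2 * Real.sqrt r) - 1 * (2 * (1 / (2 * Real.sqrt r)))) / (2 * Real.sqrt r) ^ 2) r :=
    (hasDerivAt_const r (1 : ℝ)).div (Hsqrt.const_mul 2) (by positivity)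
  have HRinner : HasDerivAt (fun x =>
      (1 / (2 * Real.sqrt x) * G x + Real.sqrt x * deriv G x) * deriv f x
        + Real.sqrt x * G x * deriv (deriv f) x)
      ((((0 * (2 * Real.sqrt r) - 1 * (2 * (1 / (2 * Real.sqrt r)))) / (2 * Real.sqrt r) ^ 2
            * G r + 1 / (2 * Real.sqrt r) * deriv G r)
          + (1 / (2 * Real.sqrt r) * deriv G r + Real.sqrt r * deriv (deriv G) r)) * deriv f r
        + (1 / (2 * Real.sqrt r) * G r + Real.sqrt r * deriv G r) * deriv (deriv f) r
        + ((1 / (2 * Real.sqrt r) * G r + Real.sqrt r * deriv G r) * deriv (deriv f) r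
          + Real.sqrt r * G r * deriv (deriv (deriv f)) r)) r := by
    exact (((Hdiv.mul (HG r hr)).add (Hsqrt.mul (HA1 r hr))).mul (HP r hr)).add
      (((Hsqrt.mul (HG r hr)).mul (HQ r hr)))
  have HR : HasDerivAt (fun x => G x * deriv (fun y => Real.sqrt y * G y * deriv f y) x)
      (deriv G r * ((1 / (2 * Real.sqrt r) * G r + Real.sqrt r * deriv G r) * deriv f r
          + Real.sqrt r * G r * deriv (deriv f) r)
        + G r * ((((0 * (2 * Real.sqrt r) - 1 * (2 * (1 / (2 * Real.sqrt r))))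
              / (2 * Real.sqrt r) ^ 2 * G r + 1 / (2 * Real.sqrt r) * deriv G r)
            + (1 / (2 * Real.sqrt r) * deriv G r + Real.sqrt r * deriv (deriv G) r)) * deriv f r
          + (1 / (2 * Real.sqrt r) * G r + Real.sqrt r * deriv G r) * deriv (deriv f) r
          + ((1 / (2 * Real.sqrt r) * G r + Real.sqrt r * deriv G r) * deriv (deriv f) r
            + Real.sqrt r * G r * deriv (deriv (deriv f)) r))) r := by
    refine HasDerivAt.congr_of_eventuallyEq ?_ hRcong
    exact (HG r hr).mul HRinner
  rw [HR.deriv]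
  set S := Real.sqrt r with hS
  have hSr : r = S ^ 2 := (Real.sq_sqrt hrpos.le).symm
  rw [hSr]
  field_simp
  ring

lemma radial_smooth {A : ℝ → ℝ}
    (hA : ContDiff ℝ (⊤ : ℕ∞) fun x : EuclideanSpace ℝ (Fin 2) => A ‖x‖) :
    ContDiffOn ℝ (⊤ : ℕ∞) A (Ioi 0) := by
  intro r hr
  have hsm : ContDiff ℝ (⊤ : ℕ∞)
      (fun r' : ℝ => A ‖r' • (EuclideanSpace.single (0 : Fin 2) (1 : ℝ))‖) :=
    hA.comp (contDiff_id.smul contDiff_const)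
  have hEq : A =ᶠ[nhds r]
      fun r' : ℝ => A ‖r' • (EuclideanSpace.single (0 : Fin 2) (1 : ℝ))‖ := by
    filter_upwards [isOpen_Ioi.mem_nhds hr] with x hx
    rw [norm_smul, EuclideanSpace.norm_single, norm_one, mul_one, Real.norm_eq_abs,
      abs_of_pos hx]
  exact ((hsm.contDiffAt).congr_of_eventuallyEq hEq).contDiffWithinAt

end PsiAux

/-- The commuted quantity `Ψ = r^{1/2}G∂_rφ` of a radially symmetric scalar field solves a
wave equation whose inverse-square potential carries the favourable constant `+3/4`. -/
theorem equation_for_Psi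
    (ε a : ℝ) (A B : ℝ → ℝ) (hmet : MetricHyp ε a A B)
    (G : ℝ → ℝ) (hG : G = fun r => A r / B r)
    (φ : ℝ → ℝ → ℝ)
    (hφ : ContDiffOn ℝ (⊤ : ℕ∞) (fun p : ℝ × ℝ => φ p.1 p.2) {p : ℝ × ℝ | 0 < p.2}) :
    ∀ t : ℝ, ∀ r : ℝ, 0 < r →
      Real.sqrt r * G r * drR (BoxR G φ) t r
        = -(dtR (dtR (PsiR G φ)) t r)
            + G r * drR (fun t' r' => G r' * drR (PsiR G φ) t' r') t r
            - (3/4) * r⁻¹ ^ 2 * G r * (G r - (2/3) * r * deriv G r) * PsiR G φ t r := by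
  intro t r hr0
  by_cases hGz : G r = 0
  · -- trivial case: everything carries a factor `G r = 0`
    have hPsi0 : ∀ t', dtR (PsiR G φ) t' r = 0 := by
      intro t'
      have h0 : (fun t'' => PsiR G φ t'' r) = fun _ => (0 : ℝ) := by
        funext t''; simp [PsiR, hGz]
      show deriv (fun t'' => PsiR G φ t'' r) t' = 0
      rw [h0, deriv_const]
    have h1 : dtR (dtR (PsiR G φ)) t r = 0 := by
      show deriv (fun t' => dtR (PsiR G φ) t' r) t = 0
      rw [funext hPsi0, deriv_const]
    rw [h1]
    simp [PsiR, hGz]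
  · -- main case: `B r ≠ 0`, so `G` is smooth near `r`
    have hBz : B r ≠ 0 := by
      intro hB0; exact hGz (by rw [hG]; simp [hB0])
    have hA' : ContDiffOn ℝ (⊤ : ℕ∞) A (Ioi 0) := PsiAux.radial_smooth hmet.smoothA
    have hB' : ContDiffOn ℝ (⊤ : ℕ∞) B (Ioi 0) := PsiAux.radial_smooth hmet.smoothB
    set sset : Set ℝ := Ioi (0 : ℝ) ∩ B ⁻¹' ({(0 : ℝ)}ᶜ) with hsset
    have hsopen : IsOpen sset :=
      (hB'.continuousOn).isOpen_inter_preimage isOpen_Ioi isOpen_compl_singleton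
    have hssub : sset ⊆ Ioi 0 := inter_subset_left
    have hrs : r ∈ sset := ⟨hr0, hBz⟩
    have hGsmooth : ContDiffOn ℝ (⊤ : ℕ∞) G sset := by
      rw [hG]
      exact (hA'.mono hssub).div (hB'.mono hssub) (fun x hx => hx.2)
    have hf : ContDiffOn ℝ (⊤ : ℕ∞) (fun y => φ t y) sset := by
      have hmap : MapsTo (fun y : ℝ => ((t, y) : ℝ × ℝ)) sset {p : ℝ × ℝ | 0 < p.2} :=
        fun y hy => hy.1
      exact hφ.comp ((contDiff_const.prodMk contDiff_id).contDiffOn) hmap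
    obtain ⟨DL, HL, hval⟩ := PsiAux.core G (fun y => φ t y) sset hsopen hssub hGsmooth hf hrs
    have hφtt : ContDiffOn ℝ (⊤ : ℕ∞) (fun p : ℝ × ℝ => dtR (dtR φ) p.1 p.2) {p : ℝ × ℝ | 0 < p.2} :=
      PsiAux.contDiffOn_dt (PsiAux.contDiffOn_dt hφ)
    have hu : ContDiffOn ℝ (⊤ : ℕ∞) (fun p : ℝ × ℝ => drR φ p.1 p.2) {p : ℝ × ℝ | 0 < p.2} :=
      PsiAux.contDiffOn_dr hφ
    have hc1 : dtR (drR (dtR φ)) t r = drR (dtR (dtR φ)) t r :=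
      PsiAux.clairaut (PsiAux.contDiffOn_dt hφ) hr0
    have hc3 : dtR (dtR (drR φ)) t r = dtR (drR (dtR φ)) t r := by
      have hfe : (fun t' => dtR (drR φ) t' r) = fun t' => drR (dtR φ) t' r :=
        funext fun t' => PsiAux.clairaut hφ hr0
      show deriv (fun t' => dtR (drR φ) t' r) t = deriv (fun t' => drR (dtR φ) t' r) t
      rw [hfe]
    have hKval : deriv (fun r' => dtR (dtR φ) t r') r = dtR (dtR (drR φ)) t r := by
      have h0 : deriv (fun r' => dtR (dtR φ) t r') r = drR (dtR (dtR φ)) t r := rfl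
      rw [h0, ← hc1, ← hc3]
    have hh2 : HasDerivAt (fun r' => dtR (dtR φ) t r') (dtR (dtR (drR φ)) t r) r := by
      have hd : HasDerivAt (fun r' => dtR (dtR φ) t r')
          (deriv (fun r' => dtR (dtR φ) t r') r) r :=
        (PsiAux.hasDerivAt_slice_r
          (PsiAux.diffAt_of_smoothOn hφtt hr0)).differentiableAt.hasDerivAt
      rwa [hKval] at hd
    have hBox : (fun r' => BoxR G φ t r') = fun r' => -(dtR (dtR φ) t r')
        + (G r' * deriv (fun y => G y * deriv (fun y' => φ t y') y) r'
          + r'⁻¹ * G r' ^ 2 * deriv (fun y' => φ t y') r') := by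
      funext x
      simp only [BoxR, drR]
      ring
    have hLHS : drR (BoxR G φ) t r = -(dtR (dtR (drR φ)) t r) + DL := by
      show deriv (fun r' => BoxR G φ t r') r = _
      rw [hBox]
      exact (hh2.neg.add HL).deriv
    have hPsi_t : ∀ t', dtR (PsiR G φ) t' r = Real.sqrt r * G r * dtR (drR φ) t' r := by
      intro t'
      have hdiff : DifferentiableAt ℝ (fun t'' => drR φ t'' r) t' :=
        (PsiAux.hasDerivAt_slice_t (t := t')
          (PsiAux.diffAt_of_smoothOn hu hr0)).differentiableAt
      show deriv (fun t'' => PsiR G φ t'' r) t' = _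
      have h0 : (fun t'' => PsiR G φ t'' r)
          = fun t'' => Real.sqrt r * G r * drR φ t'' r := rfl
      rw [h0, deriv_const_mul _ hdiff]
      rfl
    have hPsi_tt : dtR (dtR (PsiR G φ)) t r
        = Real.sqrt r * G r * dtR (dtR (drR φ)) t r := by
      have hdiff2 : DifferentiableAt ℝ (fun t' => dtR (drR φ) t' r) t :=
        (PsiAux.hasDerivAt_slice_t
          (PsiAux.diffAt_of_smoothOn (PsiAux.contDiffOn_dt hu) hr0)).differentiableAt
      show deriv (fun t' => dtR (PsiR G φ) t' r) t = _
      rw [funext hPsi_t, deriv_const_mul _ hdiff2]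
      rfl
    have hT2 : drR (fun t' r' => G r' * drR (PsiR G φ) t' r') t r
        = deriv (fun x => G x
            * deriv (fun y => Real.sqrt y * G y * deriv (fun y' => φ t y') y) x) r := rfl
    have hPsiRval : PsiR G φ t r
        = Real.sqrt r * G r * deriv (fun y' => φ t y') r := rfl
    rw [hLHS, hPsi_tt, hT2, hPsiRval]
    linear_combination hval
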